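/- arXiv:1603.04976 — 3 statements merged into one kernel-verified Lean document; each statement's English description precedes it below -/
import Mathlib

section
/- Fix ℓ ≥ 1, r ∈ {0,...,ℓ}, and nonnegative integers n_1,...,n_ℓ. The number of ℓ-tuples of sequences (m_{j,1} ≤ m_{j,2} ≤ ... ≤ m_{j,n_j})_{j=1..ℓ} of positive integers satisfying the difference conditions m_{j,k+1} ≥ m_{j,k} + 2 and the initial conditions m_{j,1} ≥ 1 + Σ_{i<j} n_i + δ_{j≤r}, with total sum Σ_{j,k} m_{j,k} = d, equals the coefficient of q^d in q^{Σ_{i=1}^ℓ n_i² + Σ_{1≤i<j≤ℓ} n_i n_j + Σ_{i=1}^r n_i} / ((q)_{n_1}···(q)_{n_ℓ}), where (q)_n = (1-q)(1-q²)···(1-qⁿ). -/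
open Finset PowerSeries

namespace CfgAux

variable {ℓ : ℕ}

lemma constC (w : ℕ) (hw : 0 < w) : constantCoeff ((1:PowerSeries ℚ) - X ^ w) = 1 := by
  rw [map_sub, map_pow, constantCoeff_X, zero_pow hw.ne', map_one, sub_zero]

lemma geom (w : ℕ) (hw : 0 < w) :
    ((1 : PowerSeries ℚ) - X ^ w)⁻¹ = PowerSeries.mk (fun c => if w ∣ c then (1:ℚ) else 0) := by
  have hc : constantCoeff ((1:PowerSeries ℚ) - X ^ w) ≠ 0 := by
    rw [constC w hw]; exact one_ne_zero
  rw [eq_comm, PowerSeries.eq_inv_iff_mul_eq_one hc]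
  ext e
  rw [mul_sub, mul_one, map_sub, PowerSeries.coeff_mul_X_pow', coeff_mk, coeff_one]
  by_cases h1 : w ∣ e <;> by_cases h2 : w ≤ e
  · rw [if_pos h1, if_pos h2, coeff_mk, if_pos (Nat.dvd_sub h1 dvd_rfl),
      if_neg (by omega : ¬ e = 0)]
    ring
  · have he : e = 0 := Nat.eq_zero_of_dvd_of_lt h1 (by omega)
    rw [if_pos h1, if_neg h2, if_pos he]; ring
  · rw [if_neg h1, if_pos h2, coeff_mk, if_neg, if_neg (by omega : ¬ e = 0)]
    · ring
    · intro hd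
      exact h1 (by have := Nat.dvd_add hd (dvd_refl w); rwa [Nat.sub_add_cancel h2] at this)
  · rw [if_neg h1, if_neg h2, if_neg]
    · ring
    · intro he; exact h1 (he ▸ dvd_zero w)


def aa (r : ℕ) (n : Fin ℓ → ℕ) (j : Fin ℓ) : ℕ :=
  1 + (∑ i ∈ Finset.univ.filter (· < j), n i) + (if (j : ℕ) + 1 ≤ r then 1 else 0)
def NN (r : ℕ) (n : Fin ℓ → ℕ) : ℕ := ∑ j, (n j * aa r n j + n j * (n j - 1))
def WW (n : Fin ℓ → ℕ) (s : (j : Fin ℓ) → Fin (n j) → ℕ) : ℕ :=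
  ∑ j, ∑ k : Fin (n j), (n j - (k : ℕ)) * s j k
def SS (n : Fin ℓ → ℕ) (j : Fin ℓ) (s : Fin (n j) → ℕ) (i : ℕ) : ℕ :=
  if h : i < n j then s ⟨i, h⟩ else 0
def toM (r : ℕ) (n : Fin ℓ → ℕ) (s : (j : Fin ℓ) → Fin (n j) → ℕ)
    (j : Fin ℓ) (k : Fin (n j)) : ℕ :=
  aa r n j + 2 * (k : ℕ) + ∑ i ∈ range ((k : ℕ) + 1), SS n j (s j) i
def toS (r : ℕ) (n : Fin ℓ → ℕ) (m : (j : Fin ℓ) → Fin (n j) → ℕ)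
    (j : Fin ℓ) (k : Fin (n j)) : ℕ :=
  if (k : ℕ) = 0 then m j k - aa r n j
  else m j k - m j ⟨(k : ℕ) - 1, lt_of_le_of_lt (Nat.sub_le _ _) k.isLt⟩ - 2
lemma one_le_aa (r : ℕ) (n : Fin ℓ → ℕ) (j : Fin ℓ) : 1 ≤ aa r n j := by unfold aa; omega

lemma aux_sum (g : ℕ → ℕ) (nn : ℕ) :
    ∑ k ∈ range nn, ∑ i ∈ range (k + 1), g i = ∑ i ∈ range nn, (nn - i) * g i := by
  induction nn with
  | zero => simp
  | succ m ih =>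
    rw [Finset.sum_range_succ, ih]
    rw [Finset.sum_range_succ (fun i => g i) m]
    rw [Finset.sum_range_succ (fun i => (m + 1 - i) * g i) m]
    have hc : ∑ i ∈ range m, (m + 1 - i) * g i
        = (∑ i ∈ range m, (m - i) * g i) + ∑ i ∈ range m, g i := by
      rw [← Finset.sum_add_distrib]
      refine Finset.sum_congr rfl fun i hi => ?_
      rw [mem_range] at hi
      have h : m + 1 - i = (m - i) + 1 := by omega
      rw [h, add_mul, one_mul]
    rw [hc]
    have h2 : m + 1 - m = 1 := by omega
    rw [h2, one_mul]
    omega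

lemma toS_toM (r : ℕ) (n : Fin ℓ → ℕ) (s : (j : Fin ℓ) → Fin (n j) → ℕ) :
    toS r n (toM r n s) = s := by
  funext j k
  by_cases hk : (k : ℕ) = 0
  · rw [toS, if_pos hk, toM]
    have h0 : ((k : ℕ)) + 1 = 1 := by omega
    rw [h0, Finset.sum_range_one, hk]
    have hS : SS n j (s j) 0 = s j k := by
      rw [SS, dif_pos (hk ▸ k.isLt)]
      congr 1
      exact Fin.ext (by simp; omega)
    rw [mul_zero, hS]
    omega
  · rw [toS, if_neg hk, toM, toM]
    have hlt : (k : ℕ) - 1 < n j := lt_of_le_of_lt (Nat.sub_le _ _) k.isLt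
    have h1 : ((k : ℕ) - 1 : ℕ) + 1 = (k : ℕ) := by omega
    have hS : SS n j (s j) (k : ℕ) = s j k := by
      simp [SS, k.isLt]
    have hsum : ∑ i ∈ range ((k : ℕ) + 1), SS n j (s j) i
        = (∑ i ∈ range (k : ℕ), SS n j (s j) i) + s j k := by
      rw [Finset.sum_range_succ, hS]
    simp only [Fin.val_mk, h1]
    omega

lemma reconstruct (r : ℕ) (n : Fin ℓ → ℕ) (m : (j : Fin ℓ) → Fin (n j) → ℕ)
    (h2 : ∀ (j : Fin ℓ) (k : Fin (n j)), (k : ℕ) = 0 → aa r n j ≤ m j k)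
    (h3 : ∀ (j : Fin ℓ) (k l : Fin (n j)), (k : ℕ) + 1 = (l : ℕ) → m j k + 2 ≤ m j l)
    (j : Fin ℓ) : ∀ (c : ℕ) (hc : c < n j),
      m j ⟨c, hc⟩ = aa r n j + 2 * c + ∑ i ∈ range (c + 1), SS n j (toS r n m j) i := by
  intro c
  induction c with
  | zero =>
    intro hc
    rw [Finset.sum_range_one]
    have hS : SS n j (toS r n m j) 0 = m j ⟨0, hc⟩ - aa r n j := by
      rw [SS, dif_pos hc, toS, if_pos rfl]
    have := h2 j ⟨0, hc⟩ rfl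
    rw [hS]; omega
  | succ c ih =>
    intro hc
    have hc' : c < n j := by omega
    have hih := ih hc'
    rw [Finset.sum_range_succ]
    have hS : SS n j (toS r n m j) (c + 1)
        = m j ⟨c + 1, hc⟩ - m j ⟨c, hc'⟩ - 2 := by
      rw [SS, dif_pos hc, toS, if_neg (by simp)]
      congr 2
    have hgap := h3 j ⟨c, hc'⟩ ⟨c + 1, hc⟩ rfl
    rw [hS]
    omega


lemma toM_toS (r : ℕ) (n : Fin ℓ → ℕ) (m : (j : Fin ℓ) → Fin (n j) → ℕ)
    (h2 : ∀ (j : Fin ℓ) (k : Fin (n j)), (k : ℕ) = 0 → aa r n j ≤ m j k)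
    (h3 : ∀ (j : Fin ℓ) (k l : Fin (n j)), (k : ℕ) + 1 = (l : ℕ) → m j k + 2 ≤ m j l) :
    toM r n (toS r n m) = m := by
  funext j k
  rcases k with ⟨c, hc⟩
  exact (reconstruct r n m h2 h3 j c hc).symm

lemma deg_toM (r : ℕ) (n : Fin ℓ → ℕ) (s : (j : Fin ℓ) → Fin (n j) → ℕ) :
    ∑ j, ∑ k, toM r n s j k = NN r n + WW n s := by
  unfold NN WW
  rw [← Finset.sum_add_distrib]
  refine Finset.sum_congr rfl fun j _ => ?_
  have h1 : ∑ k : Fin (n j), toM r n s j k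
      = ∑ c ∈ range (n j), (aa r n j + 2 * c + ∑ i ∈ range (c + 1), SS n j (s j) i) :=
    Fin.sum_univ_eq_sum_range
      (fun c => aa r n j + 2 * c + ∑ i ∈ range (c + 1), SS n j (s j) i) (n j)
  rw [h1, Finset.sum_add_distrib, Finset.sum_add_distrib, Finset.sum_const, card_range,
    smul_eq_mul, ← Finset.mul_sum, aux_sum]
  have h2 : 2 * ∑ c ∈ range (n j), c = n j * (n j - 1) := by
    rw [mul_comm, Finset.sum_range_id_mul_two]
  have h3 : ∑ i ∈ range (n j), (n j - i) * SS n j (s j) i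
      = ∑ k : Fin (n j), (n j - (k : ℕ)) * s j k := by
    rw [← Fin.sum_univ_eq_sum_range (fun i => (n j - i) * SS n j (s j) i) (n j)]
    refine Finset.sum_congr rfl fun k _ => ?_
    simp [SS, k.isLt]
  rw [h2, h3]

lemma NN_eq (r : ℕ) (n : Fin ℓ → ℕ) :
    NN r n = (∑ i, n i ^ 2) + (∑ j, ∑ i ∈ Finset.univ.filter (· < j), n i * n j)
      + (∑ i ∈ Finset.univ.filter (fun i : Fin ℓ => (i : ℕ) + 1 ≤ r), n i) := by
  unfold NN aa
  have key : ∀ j : Fin ℓ,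
      n j * (1 + (∑ i ∈ Finset.univ.filter (· < j), n i) + (if (j : ℕ) + 1 ≤ r then 1 else 0))
          + n j * (n j - 1)
        = n j ^ 2 + (∑ i ∈ Finset.univ.filter (· < j), n i * n j)
          + (if (j : ℕ) + 1 ≤ r then n j else 0) := by
    intro j
    rw [mul_add, mul_add, mul_one, Finset.mul_sum, mul_ite, mul_one, mul_zero]
    have hsq : n j + n j * (n j - 1) = n j ^ 2 := by
      cases hn : n j with
      | zero => simp
      | succ t => simp only [Nat.succ_sub_one]; ring
    have hmul : ∑ i ∈ Finset.univ.filter (· < j), n j * n i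
        = ∑ i ∈ Finset.univ.filter (· < j), n i * n j :=
      Finset.sum_congr rfl fun i _ => mul_comm _ _
    rw [hmul]
    omega
  rw [Finset.sum_congr rfl fun j _ => key j, Finset.sum_add_distrib, Finset.sum_add_distrib,
    Finset.sum_filter]

lemma card_eq (r : ℕ) (n : Fin ℓ → ℕ) (d : ℕ) :
    Nat.card {m : (j : Fin ℓ) → Fin (n j) → ℕ //
      (∀ j k, 1 ≤ m j k) ∧
      (∀ (j : Fin ℓ) (k : Fin (n j)), (k : ℕ) = 0 →
        1 + (∑ i ∈ Finset.univ.filter (· < j), n i) +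
          (if (j : ℕ) + 1 ≤ r then 1 else 0) ≤ m j k) ∧
      (∀ (j : Fin ℓ) (k l : Fin (n j)), (k : ℕ) + 1 = (l : ℕ) → m j k + 2 ≤ m j l) ∧
      ∑ j, ∑ k, m j k = d}
    = Nat.card {s : (j : Fin ℓ) → Fin (n j) → ℕ // NN r n + WW n s = d} := by
  refine Nat.card_congr ?_
  refine
    { toFun := fun m => ⟨toS r n m.1, ?_⟩
      invFun := fun s => ⟨toM r n s.1, ?_, ?_, ?_, ?_⟩
      left_inv := ?_
      right_inv := ?_ }
  · obtain ⟨m, h1, h2, h3, h4⟩ := m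
    show NN r n + WW n (toS r n m) = d
    rw [← deg_toM, toM_toS r n m h2 h3]
    exact h4
  · intro j k
    have := one_le_aa r n j
    unfold toM
    omega
  · intro j k hk
    show aa r n j ≤ toM r n s.1 j k
    unfold toM
    omega
  · intro j k l hkl
    unfold toM
    rw [← hkl, Finset.sum_range_succ (fun i => SS n j (s.1 j) i) ((k : ℕ) + 1)]
    omega
  · rw [deg_toM, s.2]
  · rintro ⟨m, h1, h2, h3, h4⟩
    exact Subtype.ext (toM_toS r n m h2 h3)
  · rintro ⟨s, hs⟩
    exact Subtype.ext (toS_toM r n s)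


lemma prod_eq (n : Fin ℓ → ℕ) :
    (∏ j, ∏ k ∈ Finset.range (n j), (1 - (X : PowerSeries ℚ) ^ (k + 1)))⁻¹
      = ∏ p : Σ j : Fin ℓ, Fin (n j),
          PowerSeries.mk (fun c => if (n p.1 - (p.2 : ℕ)) ∣ c then (1:ℚ) else 0) := by
  have hwpos : ∀ p : Σ j : Fin ℓ, Fin (n j), 0 < n p.1 - (p.2 : ℕ) := by
    intro p; have := p.2.isLt; omega
  have h1 : ∀ j : Fin ℓ, ∏ k ∈ range (n j), (1 - (X:PowerSeries ℚ) ^ (k+1))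
      = ∏ k ∈ range (n j), (1 - (X:PowerSeries ℚ) ^ (n j - k)) := by
    intro j
    rw [← Finset.prod_range_reflect]
    refine Finset.prod_congr rfl (fun k hk => ?_)
    rw [mem_range] at hk
    congr 2
    omega
  have h2 : (∏ j, ∏ k ∈ range (n j), (1 - (X:PowerSeries ℚ) ^ (k+1)))
      = ∏ p : Σ j : Fin ℓ, Fin (n j), (1 - (X:PowerSeries ℚ) ^ (n p.1 - (p.2:ℕ))) := by
    rw [← Finset.univ_sigma_univ, Finset.prod_sigma]
    refine Finset.prod_congr rfl (fun j _ => ?_)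
    rw [h1 j, ← Fin.prod_univ_eq_prod_range (fun k => 1 - (X:PowerSeries ℚ) ^ (n j - k)) (n j)]
  rw [h2, eq_comm, PowerSeries.eq_inv_iff_mul_eq_one]
  · rw [← Finset.prod_mul_distrib]
    refine Finset.prod_eq_one (fun p _ => ?_)
    rw [← geom _ (hwpos p)]
    exact PowerSeries.inv_mul_cancel _ (by rw [constC _ (hwpos p)]; exact one_ne_zero)
  · rw [map_prod]
    refine ne_of_eq_of_ne (Finset.prod_eq_one fun p _ => constC _ (hwpos p)) one_ne_zero

lemma coeff_prod_eq (n : Fin ℓ → ℕ) (e : ℕ) :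
    (coeff e) (∏ p : Σ j : Fin ℓ, Fin (n j),
        PowerSeries.mk (fun c => if (n p.1 - (p.2 : ℕ)) ∣ c then (1:ℚ) else 0))
      = Nat.card {s : (j : Fin ℓ) → Fin (n j) → ℕ // WW n s = e} := by
  rw [PowerSeries.coeff_prod]
  simp only [coeff_mk]
  have hsplit : ∀ l : (Σ j : Fin ℓ, Fin (n j)) →₀ ℕ,
      (∏ i : Σ j : Fin ℓ, Fin (n j), if (n i.1 - (i.2:ℕ)) ∣ l i then (1:ℚ) else 0)
        = if ∀ i : Σ j : Fin ℓ, Fin (n j), (n i.1 - (i.2:ℕ)) ∣ l i then 1 else 0 := by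
    intro l
    by_cases h : ∀ i : Σ j : Fin ℓ, Fin (n j), (n i.1 - (i.2:ℕ)) ∣ l i
    · rw [if_pos h]; exact Finset.prod_eq_one fun i _ => if_pos (h i)
    · rw [if_neg h]
      push_neg at h; obtain ⟨i, hi⟩ := h
      exact Finset.prod_eq_zero (mem_univ i) (if_neg hi)
  rw [Finset.sum_congr rfl fun l _ => hsplit l]
  set A := (univ : Finset (Σ j : Fin ℓ, Fin (n j))).finsuppAntidiag e with hA
  set p : ((Σ j : Fin ℓ, Fin (n j)) →₀ ℕ) → Prop :=
    fun l => ∀ i : Σ j : Fin ℓ, Fin (n j), (n i.1 - (i.2:ℕ)) ∣ l i with hp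
  have hsum : (∑ l ∈ A, if p l then (1:ℚ) else 0) = #(A.filter p) := by
    rw [← Finset.sum_filter_add_sum_filter_not A p]
    have h1 : (∑ l ∈ A.filter p, if p l then (1:ℚ) else 0) = #(A.filter p) := by
      rw [Finset.sum_congr rfl (fun l hl => if_pos (Finset.mem_filter.mp hl).2),
        Finset.sum_const, nsmul_eq_mul, mul_one]
    have h2 : (∑ l ∈ A.filter (fun l => ¬ p l), if p l then (1:ℚ) else 0) = 0 := by
      rw [Finset.sum_congr rfl (fun l hl => if_neg (Finset.mem_filter.mp hl).2)]
      exact Finset.sum_const_zero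
    rw [h1, h2, add_zero]
  rw [hsum]
  have hcard : #(A.filter p) = Nat.card {s : (j : Fin ℓ) → Fin (n j) → ℕ // WW n s = e} := by
    rw [← Nat.card_eq_finsetCard]
    refine Nat.card_congr (Equiv.symm ?_)
    refine
      { toFun := fun s => ⟨Finsupp.equivFunOnFinite.symm
          (fun q => (n q.1 - (q.2:ℕ)) * s.1 q.1 q.2), ?_⟩
        invFun := fun l => ⟨fun j k => l.1 ⟨j, k⟩ / (n j - (k:ℕ)), ?_⟩
        left_inv := ?_
        right_inv := ?_ }
    · -- membership
      rcases s with ⟨s, hs⟩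
      rw [Finset.mem_filter, hA, Finset.mem_finsuppAntidiag]
      refine ⟨⟨?_, Finset.subset_univ _⟩, ?_⟩
      · simp only [Finsupp.coe_equivFunOnFinite_symm]
        rw [← Finset.univ_sigma_univ, Finset.sum_sigma]
        exact hs
      · intro q
        simp only [Finsupp.coe_equivFunOnFinite_symm]
        exact dvd_mul_right _ _
    · -- membership to WW
      rcases l with ⟨l, hl⟩
      rw [Finset.mem_filter, hA, Finset.mem_finsuppAntidiag] at hl
      obtain ⟨⟨hsumA, -⟩, hdvd⟩ := hl
      show WW n _ = e
      unfold WW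
      calc ∑ j, ∑ k : Fin (n j), (n j - (k:ℕ)) * (l ⟨j, k⟩ / (n j - (k:ℕ)))
          = ∑ j, ∑ k : Fin (n j), l ⟨j, k⟩ := by
            refine Finset.sum_congr rfl fun j _ => Finset.sum_congr rfl fun k _ => ?_
            exact Nat.mul_div_cancel' (hdvd ⟨j, k⟩)
        _ = e := by
            rw [← Finset.sum_sigma univ (fun _ => univ) (fun q => l q),
              Finset.univ_sigma_univ]
            exact hsumA
    · rintro ⟨s, hs⟩
      apply Subtype.ext
      funext j k
      show (Finsupp.equivFunOnFinite.symm _) (⟨j, k⟩ : Σ j : Fin ℓ, Fin (n j)) / (n j - (k:ℕ)) = s j k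
      rw [Finsupp.coe_equivFunOnFinite_symm]
      have hpos : 0 < n j - (k:ℕ) := by have := k.isLt; omega
      exact Nat.mul_div_cancel_left _ hpos
    · rintro ⟨l, hl⟩
      apply Subtype.ext
      rw [Finset.mem_filter] at hl
      obtain ⟨-, hdvd⟩ := hl
      apply Finsupp.ext
      intro q
      show (Finsupp.equivFunOnFinite.symm _) q = l q
      rw [Finsupp.coe_equivFunOnFinite_symm]
      exact Nat.mul_div_cancel' (hdvd q)
  rw [hcard]


end CfgAux

/-- Configurations for `W(Λ_r)`: for each color `j ∈ {1,…,ℓ}` (indexed by `Fin ℓ`,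
color `j+1`), a weakly increasing sequence `m_{j,1} ≤ ⋯ ≤ m_{j,n_j}` of positive
integers satisfying the difference conditions `m_{j,k+1} ≥ m_{j,k} + 2` and the
initial conditions `m_{j,1} ≥ 1 + Σ_{i<j} n_i + δ_{j≤r}`, of total degree `d`. -/
noncomputable def configCount (ℓ r : ℕ) (n : Fin ℓ → ℕ) (d : ℕ) : ℕ :=
  Nat.card {m : (j : Fin ℓ) → Fin (n j) → ℕ //
    (∀ j k, 1 ≤ m j k) ∧
    (∀ (j : Fin ℓ) (k : Fin (n j)), (k : ℕ) = 0 →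
      1 + (∑ i ∈ Finset.univ.filter (· < j), n i) +
        (if (j : ℕ) + 1 ≤ r then 1 else 0) ≤ m j k) ∧
    (∀ (j : Fin ℓ) (k l : Fin (n j)), (k : ℕ) + 1 = (l : ℕ) → m j k + 2 ≤ m j l) ∧
    ∑ j, ∑ k, m j k = d}

/-- The number of configurations of total degree `d` equals the coefficient of `q^d` in
`q^{Σ n_i² + Σ_{i<j} n_i n_j + Σ_{i=1}^r n_i} / ((q)_{n_1} ⋯ (q)_{n_ℓ})`. -/
theorem configCount_eq_coeff (ℓ r : ℕ) (hr : r ≤ ℓ) (n : Fin ℓ → ℕ) (d : ℕ) :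
    (configCount ℓ r n d : ℚ) =
      PowerSeries.coeff d
        ((X : PowerSeries ℚ) ^
            ((∑ i, n i ^ 2) +
             (∑ j, ∑ i ∈ Finset.univ.filter (· < j), n i * n j) +
             (∑ i ∈ Finset.univ.filter (fun i : Fin ℓ => (i : ℕ) + 1 ≤ r), n i)) *
          (∏ j, ∏ k ∈ Finset.range (n j), (1 - (X : PowerSeries ℚ) ^ (k + 1)))⁻¹) := by
  unfold configCount
  rw [CfgAux.card_eq r n d]
  have hE : (∑ i, n i ^ 2) + (∑ j, ∑ i ∈ Finset.univ.filter (· < j), n i * n j)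
      + (∑ i ∈ Finset.univ.filter (fun i : Fin ℓ => (i : ℕ) + 1 ≤ r), n i) = CfgAux.NN r n :=
    (CfgAux.NN_eq r n).symm
  rw [hE, CfgAux.prod_eq n, mul_comm, PowerSeries.coeff_mul_X_pow']
  by_cases h : CfgAux.NN r n ≤ d
  · rw [if_pos h, CfgAux.coeff_prod_eq n (d - CfgAux.NN r n)]
    have hc : Nat.card {s : (j : Fin ℓ) → Fin (n j) → ℕ // CfgAux.NN r n + CfgAux.WW n s = d}
        = Nat.card {s : (j : Fin ℓ) → Fin (n j) → ℕ // CfgAux.WW n s = d - CfgAux.NN r n} :=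
      Nat.card_congr (Equiv.subtypeEquivRight fun s => by omega)
    rw [hc]
  · rw [if_neg h]
    have hc : IsEmpty {s : (j : Fin ℓ) → Fin (n j) → ℕ // CfgAux.NN r n + CfgAux.WW n s = d} :=
      ⟨fun ⟨s, hs⟩ => by omega⟩
    rw [Nat.card_of_isEmpty, Nat.cast_zero]
end

section
/- For each color j and each n_j ≥ 0, the generating function (by total sum) of weakly increasing sequences m_1 ≤ ... ≤ m_{n_j} of integers with m_1 ≥ c and m_{k+1} ≥ m_k + 2, where c = 1 + Σ_{i<j} n_i + δ_{j≤r}, equals q^{n_j² + (c-1)n_j}/(q)_{n_j}. Consequently the product over j = 1,...,ℓ of these generating functions equals q^{Σ_i n_i² + Σ_{i<j} n_i n_j + Σ_{i≤r} n_i} / ((q)_{n_1}···(q)_{n_ℓ}). -/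
/-!
Call `m : Fin n → ℕ` a gap sequence with bound `c` if `c ≤ m 0` and consecutive entries differ
by at least `2`. Lowering every entry by one shows `seqGF (c + 1) n = q ^ n * seqGF c n`, and
splitting on whether `m 0 = c` (then dropping `m 0` leaves a gap sequence with bound `c + 2`)
shows `seqGF c (n + 1) - seqGF (c + 1) (n + 1) = q ^ c * seqGF (c + 2) n`. Together they give
`(1 - q ^ (n + 1)) * seqGF c (n + 1) = q ^ c * seqGF (c + 2) n`, from which the closed form
follows by induction on `n`; the product formula is then a rearrangement of the exponents.
-/

open Finset PowerSeries

noncomputable def seqGF (c n : ℕ) : PowerSeries ℚ :=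
  PowerSeries.mk fun d =>
    (Nat.card {m : Fin n → ℕ //
      (∀ k : Fin n, (k : ℕ) = 0 → c ≤ m k) ∧
      (∀ k l : Fin n, (k : ℕ) + 1 = (l : ℕ) → m k + 2 ≤ m l) ∧
      ∑ k, m k = d} : ℚ)

theorem PowerSeries.eq_X_pow_mul_of_coeff {R : Type*} [Semiring R] {f g : R⟦X⟧} {n : ℕ}
    (h_lt : ∀ d < n, coeff d f = 0) (h_add : ∀ d, coeff (d + n) f = coeff d g) :
    f = X ^ n * g := by
  obtain ⟨h, rfl⟩ := X_pow_dvd_iff.mpr h_lt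
  congr 1
  ext d
  rw [← h_add, coeff_X_pow_mul]

def IsGapSeq (c : ℕ) {n : ℕ} (m : Fin n → ℕ) : Prop :=
  (∀ k : Fin n, (k : ℕ) = 0 → c ≤ m k) ∧ ∀ k l : Fin n, (k : ℕ) + 1 = l → m k + 2 ≤ m l

instance (c n : ℕ) : DecidablePred (IsGapSeq c (n := n)) :=
  fun _ => by unfold IsGapSeq; infer_instance

def gapSeqs (c n d : ℕ) : Finset (Fin n → ℕ) :=
  (Nat.antidiagonalTuple n d).filter (IsGapSeq c)

section GapSeq

variable {c n d : ℕ}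

theorem IsGapSeq.add_two_mul_le {m : Fin n → ℕ} (h : IsGapSeq c m) (k : Fin n) :
    c + 2 * k ≤ m k := by
  obtain ⟨k, hk⟩ := k
  induction k with
  | zero => exact h.1 _ rfl
  | succ k ih =>
    have := h.2 ⟨k, by omega⟩ ⟨k + 1, hk⟩ rfl
    have := ih (by omega)
    simp only at *
    omega

theorem isGapSeq_add_one_iff {m : Fin n → ℕ} :
    IsGapSeq (c + 1) (fun k => m k + 1) ↔ IsGapSeq c m := by
  refine and_congr (forall_congr' fun k => ?_) (forall₂_congr fun k l => ?_) <;>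
    simp only <;> omega

theorem isGapSeq_succ_iff {m : Fin (n + 1) → ℕ} :
    IsGapSeq (c + 1) m ↔ IsGapSeq c m ∧ m 0 ≠ c := by
  have h0 : ∀ c, (∀ k : Fin (n + 1), (k : ℕ) = 0 → c ≤ m k) ↔ c ≤ m 0 :=
    fun c => ⟨fun h => h 0 rfl, fun h k hk => Fin.ext (b := 0) hk ▸ h⟩
  have h1 : c + 1 ≤ m 0 ↔ c ≤ m 0 ∧ m 0 ≠ c := by omega
  simp only [IsGapSeq, h0, h1]
  tauto

theorem isGapSeq_cons_iff {a : ℕ} {m : Fin n → ℕ} :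
    IsGapSeq c (Fin.cons a m : Fin (n + 1) → ℕ) ↔ c ≤ a ∧ IsGapSeq (a + 2) m := by
  simp [IsGapSeq, Fin.forall_fin_succ, eq_comm (a := 0)]

theorem mem_gapSeqs {m : Fin n → ℕ} : m ∈ gapSeqs c n d ↔ IsGapSeq c m ∧ ∑ k, m k = d := by
  rw [gapSeqs, mem_filter, Nat.mem_antidiagonalTuple, and_comm]

theorem card_gapSeqs_succ_left (c n d : ℕ) :
    #(gapSeqs (c + 1) n (d + n)) = #(gapSeqs c n d) := by
  symm
  refine card_nbij' (fun m k => m k + 1) (fun m k => m k - 1) ?_ ?_ ?_ ?_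
  · intro m hm
    rw [mem_coe, mem_gapSeqs] at hm ⊢
    refine ⟨isGapSeq_add_one_iff.mpr hm.1, ?_⟩
    simp [sum_add_distrib, hm.2]
  · intro m hm
    rw [mem_coe, mem_gapSeqs] at hm ⊢
    have hpos : ∀ k, 1 ≤ m k := fun k => by have := hm.1.add_two_mul_le k; omega
    have hm' : (fun k => m k - 1 + 1) = m := funext fun k => Nat.sub_add_cancel (hpos k)
    refine ⟨isGapSeq_add_one_iff.mp (hm' ▸ hm.1), ?_⟩
    have := congrArg (fun m : Fin n → ℕ => ∑ k, m k) hm'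
    simp only [sum_add_distrib, sum_const, card_univ, Fintype.card_fin, smul_eq_mul,
      mul_one] at this
    show ∑ k, (m k - 1) = d
    omega
  · intro m _
    simp
  · intro m hm
    rw [mem_coe, mem_gapSeqs] at hm
    funext k
    have := hm.1.add_two_mul_le k
    simp only
    omega

theorem gapSeqs_succ_left_of_lt (c : ℕ) (h : d < n) : gapSeqs (c + 1) n d = ∅ := by
  refine eq_empty_of_forall_notMem fun m hm => ?_
  rw [mem_gapSeqs] at hm
  have : ∑ _k : Fin n, 1 ≤ ∑ k, m k :=
    sum_le_sum fun k _ => by have := hm.1.add_two_mul_le k; omega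
  simp only [sum_const, card_univ, Fintype.card_fin, smul_eq_mul, mul_one] at this
  omega

theorem card_filter_apply_zero_eq (c n d : ℕ) :
    #((gapSeqs c (n + 1) (d + c)).filter (· 0 = c)) = #(gapSeqs (c + 2) n d) := by
  refine card_nbij' Fin.tail (fun m => Fin.cons c m) ?_ ?_ ?_ ?_
  · intro m hm
    rw [mem_coe, mem_filter, mem_gapSeqs] at hm
    obtain ⟨⟨hgap, hsum⟩, h0⟩ := hm
    rw [← Fin.cons_self_tail m, h0] at hgap hsum
    rw [isGapSeq_cons_iff] at hgap
    rw [Fin.sum_cons] at hsum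
    rw [mem_coe, mem_gapSeqs]
    exact ⟨hgap.2, by omega⟩
  · intro m hm
    rw [mem_coe, mem_gapSeqs] at hm
    rw [mem_coe, mem_filter, mem_gapSeqs, isGapSeq_cons_iff, Fin.sum_cons, hm.2]
    exact ⟨⟨⟨le_rfl, hm.1⟩, add_comm _ _⟩, rfl⟩
  · intro m hm
    rw [mem_coe, mem_filter] at hm
    exact hm.2 ▸ Fin.cons_self_tail m
  · intro m _
    exact Fin.tail_cons _ _

theorem filter_apply_zero_eq_of_lt (h : d < c) :
    (gapSeqs c (n + 1) d).filter (· 0 = c) = ∅ := by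
  refine filter_false_of_mem fun m hm h0 => ?_
  rw [mem_gapSeqs] at hm
  have := single_le_sum (fun k _ => Nat.zero_le (m k)) (mem_univ 0)
  omega

theorem card_gapSeqs_succ (c n d : ℕ) :
    #(gapSeqs c (n + 1) d) =
      #((gapSeqs c (n + 1) d).filter (· 0 = c)) + #(gapSeqs (c + 1) (n + 1) d) := by
  rw [← card_filter_add_card_filter_not (· 0 = c)]
  congr 2
  ext m
  simp only [mem_filter, mem_gapSeqs, isGapSeq_succ_iff]
  tauto

end GapSeq

theorem coeff_seqGF (c n d : ℕ) : coeff d (seqGF c n) = #(gapSeqs c n d) := by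
  rw [seqGF, coeff_mk, ← Nat.card_eq_finsetCard]
  congr 1
  exact Nat.card_congr <| Equiv.subtypeEquivRight fun m => by
    rw [mem_gapSeqs, IsGapSeq, and_assoc]

theorem seqGF_zero (c : ℕ) : seqGF c 0 = 1 := by
  ext d
  rw [coeff_seqGF, coeff_one]
  have hgap (m : Fin 0 → ℕ) : IsGapSeq c m := ⟨finZeroElim, finZeroElim⟩
  rcases d with _ | d <;> simp [gapSeqs, hgap]

theorem seqGF_succ_left (c n : ℕ) : seqGF (c + 1) n = X ^ n * seqGF c n := by
  refine eq_X_pow_mul_of_coeff (fun d hd => ?_) (fun d => ?_)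
  · rw [coeff_seqGF, gapSeqs_succ_left_of_lt c hd, card_empty, Nat.cast_zero]
  · rw [coeff_seqGF, coeff_seqGF, card_gapSeqs_succ_left]

theorem seqGF_sub_seqGF_succ_left (c n : ℕ) :
    seqGF c (n + 1) - seqGF (c + 1) (n + 1) = X ^ c * seqGF (c + 2) n := by
  have coeff_sub : ∀ d, coeff d (seqGF c (n + 1) - seqGF (c + 1) (n + 1)) =
      #((gapSeqs c (n + 1) d).filter (· 0 = c)) := fun d => by
    rw [map_sub, coeff_seqGF, coeff_seqGF, card_gapSeqs_succ, Nat.cast_add, add_sub_cancel_right]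
  refine eq_X_pow_mul_of_coeff (fun d hd => ?_) (fun d => ?_)
  · rw [coeff_sub, filter_apply_zero_eq_of_lt hd, card_empty, Nat.cast_zero]
  · rw [coeff_sub, coeff_seqGF, card_filter_apply_zero_eq]

theorem prod_mul_seqGF_succ_left (c n : ℕ) :
    (∏ k ∈ range n, (1 - X ^ (k + 1))) * seqGF (c + 1) n = X ^ (n ^ 2 + c * n) := by
  induction n generalizing c with
  | zero => simp [seqGF_zero]
  | succ n ih =>
    have hrec : (1 - X ^ (n + 1)) * seqGF (c + 1) (n + 1) = X ^ (c + 1) * seqGF (c + 3) n := by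
      rw [← seqGF_sub_seqGF_succ_left, seqGF_succ_left (c + 1) (n + 1)]
      ring
    calc (∏ k ∈ range (n + 1), (1 - X ^ (k + 1))) * seqGF (c + 1) (n + 1)
        = X ^ (c + 1) * ((∏ k ∈ range n, (1 - X ^ (k + 1))) * seqGF (c + 2 + 1) n) := by
          rw [prod_range_succ, mul_assoc, hrec]
          ring
      _ = X ^ ((n + 1) ^ 2 + c * (n + 1)) := by
          rw [ih, ← pow_add]
          ring

theorem prod_mul_seqGF {c : ℕ} (hc : 1 ≤ c) (n : ℕ) :
    (∏ k ∈ range n, (1 - X ^ (k + 1))) * seqGF c n = X ^ (n ^ 2 + (c - 1) * n) := by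
  obtain ⟨c, rfl⟩ := Nat.exists_eq_add_of_le' hc
  exact prod_mul_seqGF_succ_left c n

theorem seqGF_eq_and_prod_general (ℓ r : ℕ) (n : Fin ℓ → ℕ)
    (c : Fin ℓ → ℕ)
    (hc : ∀ j : Fin ℓ, c j = 1 + (∑ i ∈ Finset.univ.filter (· < j), n i) +
      (if (j : ℕ) + 1 ≤ r then 1 else 0)) :
    (∀ j : Fin ℓ,
      seqGF (c j) (n j) =
        (X : PowerSeries ℚ) ^ (n j ^ 2 + (c j - 1) * n j) *
          (∏ k ∈ Finset.range (n j), (1 - (X : PowerSeries ℚ) ^ (k + 1)))⁻¹) ∧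
    (∏ j, seqGF (c j) (n j)) =
      (X : PowerSeries ℚ) ^
          ((∑ i, n i ^ 2) +
           (∑ j, ∑ i ∈ Finset.univ.filter (· < j), n i * n j) +
           (∑ i ∈ Finset.univ.filter (fun i : Fin ℓ => (i : ℕ) + 1 ≤ r), n i)) *
        (∏ j, ∏ k ∈ Finset.range (n j), (1 - (X : PowerSeries ℚ) ^ (k + 1)))⁻¹ := by
  have hc_pos (j : Fin ℓ) : 1 ≤ c j := by rw [hc j]; omega
  have hc_sub (j : Fin ℓ) : c j - 1 = ∑ i ∈ univ.filter (· < j), n i +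
      if (j : ℕ) + 1 ≤ r then 1 else 0 := by
    rw [hc j]; omega
  have hexp : ∑ j, (n j ^ 2 + (c j - 1) * n j) =
      (∑ i, n i ^ 2) + (∑ j, ∑ i ∈ univ.filter (· < j), n i * n j) +
        ∑ i ∈ univ.filter (fun i : Fin ℓ => (i : ℕ) + 1 ≤ r), n i := by
    simp only [hc_sub, add_mul, sum_mul, ite_mul, one_mul, zero_mul, sum_add_distrib,
      ← sum_filter, add_assoc]
  refine ⟨fun j => ?_, ?_⟩ <;> rw [eq_mul_inv_iff_mul_eq (by simp), mul_comm]
  · exact prod_mul_seqGF (hc_pos j) (n j)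
  · rw [← prod_mul_distrib, ← hexp, ← prod_pow_eq_pow_sum]
    exact prod_congr rfl fun j _ => prod_mul_seqGF (hc_pos j) (n j)

/-- For each color `j` and each `n_j ≥ 0`, with `c_j = 1 + Σ_{i<j} n_i + δ_{j≤r}`,
the generating function of such sequences equals `q^{n_j² + (c_j - 1) n_j}/(q)_{n_j}`;
consequently, the product over all colors equals
`q^{Σ n_i² + Σ_{i<j} n_i n_j + Σ_{i≤r} n_i} / ((q)_{n_1}⋯(q)_{n_ℓ})`. -/
theorem seqGF_eq_and_prod (ℓ r : ℕ) (hr : r ≤ ℓ) (n : Fin ℓ → ℕ)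
    (c : Fin ℓ → ℕ)
    (hc : ∀ j : Fin ℓ, c j = 1 + (∑ i ∈ Finset.univ.filter (· < j), n i) +
      (if (j : ℕ) + 1 ≤ r then 1 else 0)) :
    (∀ j : Fin ℓ,
      seqGF (c j) (n j) =
        (X : PowerSeries ℚ) ^ (n j ^ 2 + (c j - 1) * n j) *
          (∏ k ∈ Finset.range (n j), (1 - (X : PowerSeries ℚ) ^ (k + 1)))⁻¹) ∧
    (∏ j, seqGF (c j) (n j)) =
      (X : PowerSeries ℚ) ^
          ((∑ i, n i ^ 2) +
           (∑ j, ∑ i ∈ Finset.univ.filter (· < j), n i * n j) +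
           (∑ i ∈ Finset.univ.filter (fun i : Fin ℓ => (i : ℕ) + 1 ≤ r), n i)) *
        (∏ j, ∏ k ∈ Finset.range (n j), (1 - (X : PowerSeries ℚ) ^ (k + 1)))⁻¹ :=
  seqGF_eq_and_prod_general ℓ r n c hc
end

section
/- For ℓ = 1 and r = 0, the number of configurations (sequences m_1 < ... < m_n, m_1 ≥ 1, gaps ≥ 2) of degree d, summed over all n, equals the number of partitions of d into parts with pairwise differences ≥ 2; its generating function is Σ_{n≥0} q^{n²}/(q)_n, the Rogers–Ramanujan sum side. -/
open Finset PowerSeries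

/-- `D d` is the number of partitions of `d` into (distinct) parts with pairwise
differences at least `2`, encoded as finite sets of positive integers whose
elements pairwise differ by at least `2` and which sum to `d`. -/
noncomputable def gapPartitions (d : ℕ) : ℕ :=
  Nat.card {s : Finset ℕ //
    (∀ x ∈ s, 1 ≤ x) ∧
    (∀ x ∈ s, ∀ y ∈ s, x ≠ y → 2 ≤ ((x : ℤ) - y).natAbs) ∧
    ∑ x ∈ s, x = d}

/-!
Let `G_n` be the generating function of gap sets with `n` elements. A gap set not containing `1`
is the translate by `1` of a gap set of the same size, of weight smaller by `n`; a gap set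
containing `1` is `1` together with the translate by `2` of a gap set with `n - 1` elements,
of weight smaller by `2n - 1`. Hence `(1 - q^n) G_n = q^(2n-1) G_(n-1)`, and as
`1 + 3 + ⋯ + (2n - 1) = n²`, induction gives `G_n = q^(n²) / (q)_n`. Summing over `n` counts
every gap set of weight `d` once.
-/

def IsGapSet (s : Finset ℕ) : Prop := 0 ∉ s ∧ ∀ x ∈ s, ∀ y ∈ s, x < y → x + 2 ≤ y

instance : DecidablePred IsGapSet := fun _ => by unfold IsGapSet; infer_instance

lemma isGapSet_iff (s : Finset ℕ) :
    IsGapSet s ↔ (∀ x ∈ s, 1 ≤ x) ∧ ∀ x ∈ s, ∀ y ∈ s, x ≠ y → 2 ≤ ((x : ℤ) - y).natAbs := by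
  refine ⟨fun ⟨h0, hgap⟩ => ⟨fun x hx => ?_, fun x hx y hy hxy => ?_⟩,
    fun ⟨hpos, hgap⟩ => ⟨fun h0 => by simpa using hpos 0 h0, fun x hx y hy hxy => ?_⟩⟩
  · exact Nat.one_le_iff_ne_zero.2 (ne_of_mem_of_not_mem hx h0)
  · rcases hxy.lt_or_gt with h | h
    · have := hgap x hx y hy h; omega
    · have := hgap y hy x hx h; omega
  · have := hgap x hx y hy hxy.ne; omega

lemma isGapSet_image_add_one_iff {t : Finset ℕ} :
    IsGapSet (t.image (· + 1)) ∧ 1 ∉ t.image (· + 1) ↔ IsGapSet t := by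
  simp [IsGapSet, and_comm]
  exact fun _ => Iff.rfl

lemma isGapSet_insert_one_image_add_two_iff {t : Finset ℕ} :
    IsGapSet (insert 1 (t.image (· + 2))) ↔ IsGapSet t := by
  simp [IsGapSet, Nat.one_le_iff_ne_zero]

lemma exists_image_add_one_eq {s : Finset ℕ} (h0 : 0 ∉ s) :
    ∃ t : Finset ℕ, t.image (· + 1) = s := by
  refine ⟨s.image (· - 1), ?_⟩
  rw [image_image]
  refine (image_congr fun x hx => Nat.sub_add_cancel ?_).trans image_id
  exact Nat.one_le_iff_ne_zero.2 (ne_of_mem_of_not_mem hx h0)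

lemma exists_insert_one_image_add_two_eq {s : Finset ℕ} (hs : IsGapSet s) (h1 : 1 ∈ s) :
    ∃ t : Finset ℕ, insert 1 (t.image (· + 2)) = s := by
  have h3 : ∀ x ∈ s.erase 1, 2 ≤ x := fun x hx => by
    obtain ⟨hx1, hx⟩ := mem_erase.1 hx
    have hx0 : x ≠ 0 := ne_of_mem_of_not_mem hx hs.1
    have := hs.2 1 h1 x hx (by omega)
    omega
  refine ⟨(s.erase 1).image (· - 2), ?_⟩
  conv_rhs => rw [← insert_erase h1]
  rw [image_image]
  exact congrArg _ ((image_congr fun x hx => Nat.sub_add_cancel (h3 x hx)).trans image_id)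

lemma sum_image_add (t : Finset ℕ) (k : ℕ) :
    ∑ x ∈ t.image (· + k), x = ∑ x ∈ t, x + #t * k := by
  rw [sum_image (add_left_injective k).injOn, sum_add_distrib, sum_const, smul_eq_mul]

def gapSets (n d : ℕ) : Finset (Finset ℕ) :=
  {s ∈ (range (d + 1)).powerset | IsGapSet s ∧ #s = n ∧ ∑ x ∈ s, x = d}

lemma subset_range_of_sum_eq {s : Finset ℕ} {d : ℕ} (hs : ∑ x ∈ s, x = d) :
    s ⊆ range (d + 1) :=
  fun _ hx =>
    mem_range.2 (Nat.lt_succ_of_le (hs ▸ single_le_sum (f := id) (fun _ _ => Nat.zero_le _) hx))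

lemma mem_gapSets {s : Finset ℕ} {n d : ℕ} :
    s ∈ gapSets n d ↔ IsGapSet s ∧ #s = n ∧ ∑ x ∈ s, x = d := by
  rw [gapSets, mem_filter, mem_powerset, and_iff_right_iff_imp]
  exact fun h => subset_range_of_sum_eq h.2.2

lemma image_add_one_mem_gapSets_iff {t : Finset ℕ} {n d : ℕ} :
    t.image (· + 1) ∈ gapSets n (d + n) ∧ 1 ∉ t.image (· + 1) ↔ t ∈ gapSets n d := by
  rw [mem_gapSets, mem_gapSets, card_image_of_injective _ (add_left_injective 1), sum_image_add]
  constructor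
  · rintro ⟨⟨hgap, hn, hd⟩, h1⟩
    exact ⟨isGapSet_image_add_one_iff.1 ⟨hgap, h1⟩, hn, by omega⟩
  · rintro ⟨hgap, hn, hd⟩
    obtain ⟨hgap, h1⟩ := isGapSet_image_add_one_iff.2 hgap
    exact ⟨⟨hgap, hn, by omega⟩, h1⟩

lemma insert_one_image_add_two_mem_gapSets_iff {t : Finset ℕ} {n d : ℕ} :
    insert 1 (t.image (· + 2)) ∈ gapSets (n + 1) (d + (2 * n + 1)) ↔ t ∈ gapSets n d := by
  have h1 : 1 ∉ t.image (· + 2) := by simp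
  rw [mem_gapSets, mem_gapSets, card_insert_of_notMem h1, sum_insert h1,
    card_image_of_injective _ (add_left_injective 2), sum_image_add,
    isGapSet_insert_one_image_add_two_iff]
  constructor
  · rintro ⟨hgap, hn, hd⟩
    exact ⟨hgap, by omega, by omega⟩
  · rintro ⟨hgap, rfl, hd⟩; exact ⟨hgap, rfl, by omega⟩

lemma card_filter_one_notMem_gapSets (n d : ℕ) :
    #{s ∈ gapSets n d | 1 ∉ s} = if n ≤ d then #(gapSets n (d - n)) else 0 := by
  split_ifs with h
  · obtain ⟨e, rfl⟩ := Nat.exists_eq_add_of_le' h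
    rw [Nat.add_sub_cancel, eq_comm]
    refine card_nbij (·.image (· + 1)) (fun t ht => ?_)
      (image_injective (add_left_injective 1)).injOn fun s hs => ?_
    · exact mem_filter.2 (image_add_one_mem_gapSets_iff.2 ht)
    · obtain ⟨hs, h1⟩ := mem_filter.1 hs
      obtain ⟨t, rfl⟩ := exists_image_add_one_eq (mem_gapSets.1 hs).1.1
      exact ⟨t, image_add_one_mem_gapSets_iff.1 ⟨hs, h1⟩, rfl⟩
  · rw [card_eq_zero, filter_eq_empty_iff]
    intro s hs h1
    obtain ⟨t, rfl⟩ := exists_image_add_one_eq (mem_gapSets.1 hs).1.1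
    rw [mem_gapSets, card_image_of_injective _ (add_left_injective 1), sum_image_add] at hs
    omega

lemma card_filter_one_mem_gapSets (n d : ℕ) :
    #{s ∈ gapSets (n + 1) d | 1 ∈ s} =
      if 2 * n + 1 ≤ d then #(gapSets n (d - (2 * n + 1))) else 0 := by
  split_ifs with h
  · obtain ⟨e, rfl⟩ := Nat.exists_eq_add_of_le' h
    rw [Nat.add_sub_cancel, eq_comm]
    refine card_nbij (fun t => insert 1 (t.image (· + 2))) (fun t ht => ?_) (fun t _ t' _ he => ?_)
      fun s hs => ?_
    · exact mem_filter.2 ⟨insert_one_image_add_two_mem_gapSets_iff.2 ht, mem_insert_self _ _⟩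
    · have h1 : ∀ u : Finset ℕ, 1 ∉ u.image (· + 2) := by simp
      have := congrArg (·.erase 1) he
      simp only [erase_insert (h1 _)] at this
      exact image_injective (add_left_injective 2) this
    · obtain ⟨hs, h1⟩ := mem_filter.1 hs
      obtain ⟨t, rfl⟩ := exists_insert_one_image_add_two_eq (mem_gapSets.1 hs).1 h1
      exact ⟨t, insert_one_image_add_two_mem_gapSets_iff.1 hs, rfl⟩
  · rw [card_eq_zero, filter_eq_empty_iff]
    intro s hs h1
    obtain ⟨t, rfl⟩ := exists_insert_one_image_add_two_eq (mem_gapSets.1 hs).1 h1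
    have h1 : 1 ∉ t.image (· + 2) := by simp
    rw [mem_gapSets, card_insert_of_notMem h1, sum_insert h1,
      card_image_of_injective _ (add_left_injective 2), sum_image_add] at hs
    omega

noncomputable def gapSetGenFun (R : Type*) [Semiring R] (n : ℕ) : R⟦X⟧ :=
  mk fun d => (#(gapSets n d) : R)

section
variable {R : Type*}

lemma gapSetGenFun_zero [Semiring R] : gapSetGenFun R 0 = 1 := by
  ext d
  have : gapSets 0 d = ({∅} : Finset (Finset ℕ)).filter fun _ => d = 0 := by
    ext s
    rw [mem_gapSets, mem_filter, mem_singleton, card_eq_zero]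
    constructor
    · rintro ⟨-, rfl, rfl⟩; simp
    · rintro ⟨rfl, rfl⟩; simp [IsGapSet]
  rw [gapSetGenFun, coeff_mk, coeff_one, this, card_filter, sum_singleton]
  split_ifs <;> simp

lemma gapSetGenFun_succ [Semiring R] (n : ℕ) :
    gapSetGenFun R (n + 1) =
      X ^ (n + 1) * gapSetGenFun R (n + 1) + X ^ (2 * n + 1) * gapSetGenFun R n := by
  ext d
  rw [map_add, coeff_X_pow_mul', coeff_X_pow_mul']
  simp only [gapSetGenFun, coeff_mk]
  rw [← card_filter_add_card_filter_not (fun s => 1 ∉ s)]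
  simp only [not_not, card_filter_one_notMem_gapSets, card_filter_one_mem_gapSets, Nat.cast_add,
    Nat.cast_ite, Nat.cast_zero]

lemma prod_one_sub_X_pow_mul_gapSetGenFun [CommRing R] (n : ℕ) :
    (∏ k ∈ range n, (1 - X ^ (k + 1))) * gapSetGenFun R n = X ^ (n ^ 2) := by
  induction n with
  | zero => simp [gapSetGenFun_zero]
  | succ n ih =>
    have hrec : (1 - X ^ (n + 1)) * gapSetGenFun R (n + 1) = X ^ (2 * n + 1) * gapSetGenFun R n := by
      rw [sub_mul, one_mul, sub_eq_iff_eq_add', ← gapSetGenFun_succ]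
    calc (∏ k ∈ range (n + 1), (1 - X ^ (k + 1))) * gapSetGenFun R (n + 1)
        = (∏ k ∈ range n, (1 - X ^ (k + 1))) * ((1 - X ^ (n + 1)) * gapSetGenFun R (n + 1)) := by
          rw [prod_range_succ, mul_assoc]
      _ = X ^ (2 * n + 1) * ((∏ k ∈ range n, (1 - X ^ (k + 1))) * gapSetGenFun R n) := by
          rw [hrec, mul_left_comm]
      _ = X ^ ((n + 1) ^ 2) := by rw [ih, ← pow_add]; ring_nf

lemma gapSetGenFun_eq [Field R] (n : ℕ) :
    gapSetGenFun R n = X ^ (n ^ 2) * (∏ k ∈ range n, (1 - X ^ (k + 1)))⁻¹ := by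
  rw [PowerSeries.eq_mul_inv_iff_mul_eq, mul_comm, prod_one_sub_X_pow_mul_gapSetGenFun]
  simp [map_prod]

end

lemma gapPartitions_eq_sum_card_gapSets (d : ℕ) :
    gapPartitions d = ∑ n ∈ range (d + 1), #(gapSets n d) := by
  set T : Finset (Finset ℕ) := {s ∈ (range (d + 1)).powerset | IsGapSet s ∧ ∑ x ∈ s, x = d}
  have hT : gapPartitions d = #T := by
    rw [gapPartitions, ← Nat.card_eq_finsetCard]
    refine Nat.card_congr (Equiv.subtypeEquivRight fun s => ?_)
    rw [mem_filter, mem_powerset, isGapSet_iff, and_assoc]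
    exact ⟨fun h => ⟨subset_range_of_sum_eq h.2.2, h⟩, fun h => h.2⟩
  have hcard : ∀ s ∈ T, #s ∈ range (d + 1) := fun s hs => by
    obtain ⟨-, hgap, hd⟩ := mem_filter.1 hs
    have := card_nsmul_le_sum s (fun x => x) 1 ((isGapSet_iff s).1 hgap).1
    rw [smul_eq_mul, mul_one] at this
    exact mem_range.2 (by omega)
  rw [hT, card_eq_sum_card_fiberwise hcard]
  refine sum_congr rfl fun n _ => congrArg card ?_
  ext s
  simp only [T, gapSets, mem_filter]
  tauto

/-- The Rogers–Ramanujan sum side: `Σ_{n≥0} q^{n²}/(q)_n = Σ_{d≥0} D(d) q^d`,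
where `D(d)` counts partitions of `d` into parts with pairwise differences `≥ 2`.
Coefficient-wise: since `q^{n²}/(q)_n` has no `q^d`-term once `n² > d`, the sum
over all `n ≥ 0` of the `q^d`-coefficients reduces to the finite sum over
`n ≤ d`. -/
theorem rogers_ramanujan_sum_side (d : ℕ) :
    (gapPartitions d : ℚ) =
      ∑ n ∈ Finset.range (d + 1),
        PowerSeries.coeff (R := ℚ) d
          ((X : PowerSeries ℚ) ^ (n ^ 2) *
            (∏ k ∈ Finset.range n, (1 - (X : PowerSeries ℚ) ^ (k + 1)))⁻¹) := by
  rw [gapPartitions_eq_sum_card_gapSets]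
  push_cast
  refine sum_congr rfl fun n _ => ?_
  rw [← gapSetGenFun_eq, gapSetGenFun, coeff_mk]
end
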